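/- For nonnegative integers ν and Δ, every graph G with ν(G) ≤ ν and Δ(G) ≤ Δ satisfies e(G) ≤ νΔ + ⌊Δ/2⌋·⌊ν/⌈Δ/2⌉⌋ (with Δ ≥ 1). -/

import Mathlib

def IsMatchingSet {V : Type*} (G : SimpleGraph V) (M : Finset (Sym2 V)) : Prop :=
  (∀ e ∈ M, e ∈ G.edgeSet) ∧ ∀ e ∈ M, ∀ f ∈ M, e ≠ f → ∀ v, v ∈ e → v ∉ f

/-!
Induct on the vertex set `s`. If deleting some vertex `v` lowers the matching number, then
`e(s) ≤ e(s - v) + Δ` and `ν(s - v) < ν(s)`. Otherwise no vertex of `s` is essential, hence no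
vertex of a component `C` of `G[s]` is essential in `C`, and Gallai's lemma gives
`|C| ≤ 2ν(C) + 1`. Counting pairs when `|C| ≤ Δ` and degrees otherwise,
`e(C) ≤ ν(C)Δ + ⌊Δ/2⌋⌊ν(C)/⌈Δ/2⌉⌋`; the rest `s \ C` is handled by induction, the bound being
superadditive in `ν`.

Gallai's lemma is proved as in Lovász–Plummer, by induction along a walk between two vertices
missed by a maximum matching; the alternating path of the usual argument can be replaced by a
single edge exchange.
-/

open Finset

def chvatalHansonBound (ν Δ : ℕ) : ℕ := ν * Δ + Δ / 2 * (ν / ((Δ + 1) / 2))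

lemma chvatalHansonBound_mono (Δ : ℕ) : Monotone (chvatalHansonBound · Δ) := fun a b hab => by
  simp only [chvatalHansonBound]
  gcongr

lemma chvatalHansonBound_add_le (a b Δ : ℕ) :
    chvatalHansonBound a Δ + chvatalHansonBound b Δ ≤ chvatalHansonBound (a + b) Δ := by
  unfold chvatalHansonBound
  have := Nat.mul_le_mul_left (Δ / 2)
    (Nat.div_add_div_le_add_div (x := a) (y := b) (z := (Δ + 1) / 2))
  rw [Nat.mul_add] at this
  nlinarith

lemma add_le_chvatalHansonBound_succ (ν Δ : ℕ) :
    chvatalHansonBound ν Δ + Δ ≤ chvatalHansonBound (ν + 1) Δ :=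
  calc chvatalHansonBound ν Δ + Δ ≤ chvatalHansonBound ν Δ + chvatalHansonBound 1 Δ := by
        unfold chvatalHansonBound; omega
    _ ≤ _ := chvatalHansonBound_add_le ν 1 Δ

section

variable {V : Type*} {G : SimpleGraph V}

namespace IsMatchingSet

variable {M N : Finset (Sym2 V)}

lemma subset (hM : IsMatchingSet G M) (h : N ⊆ M) : IsMatchingSet G N :=
  ⟨fun e he => hM.1 e (h he), fun e he f hf => hM.2 e (h he) f (h hf)⟩

lemma eq_of_mem (hM : IsMatchingSet G M) {e f : Sym2 V} (he : e ∈ M) (hf : f ∈ M) {v : V}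
    (hve : v ∈ e) (hvf : v ∈ f) : e = f := by
  by_contra h
  exact hM.2 e he f hf h v hve hvf

end IsMatchingSet

namespace SimpleGraph

variable (G) in
open Classical in
noncomputable def matchingNumberOn (s : Finset V) : ℕ :=
  (s.sym2.powerset.filter (IsMatchingSet G)).sup card

lemma card_le_matchingNumberOn {s : Finset V} {M : Finset (Sym2 V)} (hM : IsMatchingSet G M)
    (hMs : M ⊆ s.sym2) : #M ≤ G.matchingNumberOn s := by
  classical
  exact le_sup (f := card) (mem_filter.2 ⟨mem_powerset.2 hMs, hM⟩)

structure IsMaximumMatchingOn (s : Finset V) (M : Finset (Sym2 V)) : Prop where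
  subset_sym2 : M ⊆ s.sym2
  isMatchingSet : IsMatchingSet G M
  card_eq : #M = G.matchingNumberOn s

variable (G) in
lemma exists_isMaximumMatchingOn (s : Finset V) : ∃ M, G.IsMaximumMatchingOn s M := by
  classical
  obtain ⟨M, hM, hcard⟩ := exists_mem_eq_sup (s.sym2.powerset.filter (IsMatchingSet G))
    ⟨∅, mem_filter.2 ⟨empty_mem_powerset _, fun _ h => absurd h (notMem_empty _),
      fun _ h => absurd h (notMem_empty _)⟩⟩ card
  obtain ⟨hMs, hM⟩ := mem_filter.1 hM
  exact ⟨M, mem_powerset.1 hMs, hM, by rw [matchingNumberOn]; convert hcard.symm⟩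

end SimpleGraph

variable [DecidableEq V]

def matchedVerts (M : Finset (Sym2 V)) : Finset V := M.biUnion Sym2.toFinset

@[simp]
lemma mem_matchedVerts {M : Finset (Sym2 V)} {v : V} : v ∈ matchedVerts M ↔ ∃ e ∈ M, v ∈ e := by
  simp [matchedVerts]

lemma matchedVerts_mono {M N : Finset (Sym2 V)} (h : M ⊆ N) : matchedVerts M ⊆ matchedVerts N :=
  biUnion_subset_biUnion_of_subset_left _ h

lemma matchedVerts_subset {M : Finset (Sym2 V)} {s : Finset V} (h : M ⊆ s.sym2) :
    matchedVerts M ⊆ s := fun v hv => by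
  obtain ⟨e, he, hve⟩ := mem_matchedVerts.1 hv
  exact mem_sym2_iff.1 (h he) v hve

namespace IsMatchingSet

variable {M N : Finset (Sym2 V)}

lemma insert_edge (hM : IsMatchingSet G M) {a b : V} (hab : G.Adj a b) (ha : a ∉ matchedVerts M)
    (hb : b ∉ matchedVerts M) : IsMatchingSet G (insert s(a, b) M) := by
  have hfree : ∀ v ∈ s(a, b), ∀ f ∈ M, v ∉ f := by
    rintro v hv f hf hvf
    rcases Sym2.mem_iff.1 hv with rfl | rfl
    exacts [ha (mem_matchedVerts.2 ⟨f, hf, hvf⟩), hb (mem_matchedVerts.2 ⟨f, hf, hvf⟩)]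
  refine ⟨fun e he => ?_, fun e he f hf hef v hve hvf => ?_⟩
  · rcases mem_insert.1 he with rfl | he
    exacts [hab, hM.1 e he]
  · rcases mem_insert.1 he with rfl | he <;> rcases mem_insert.1 hf with rfl | hf
    · exact hef rfl
    · exact hfree v hve f hf hvf
    · exact hfree v hvf e he hve
    · exact hM.2 e he f hf hef v hve hvf

lemma card_matchedVerts (hM : IsMatchingSet G M) : #(matchedVerts M) = 2 * #M := by
  rw [matchedVerts, card_biUnion, sum_const_nat (m := 2), mul_comm]
  · exact fun e he =>
      Sym2.card_toFinset_of_not_isDiag _ (G.not_isDiag_of_mem_edgeSet (hM.1 e he))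
  · intro e he f hf hef
    simp only [Function.onFun, disjoint_left, Sym2.mem_toFinset]
    exact hM.2 e he f hf hef

/-- The `M`-edge `s(y, t)` replaces the `N`-edge at `t`, which exists since `N` is maximum
in `M ∪ N`. -/
lemma exists_exchange (hM : IsMatchingSet G M) (hN : IsMatchingSet G N) {y : V}
    (hyM : y ∈ matchedVerts M) (hyN : y ∉ matchedVerts N)
    (hmax : ∀ K ⊆ M ∪ N, IsMatchingSet G K → #K ≤ #N) :
    ∃ N' ⊆ M ∪ N, IsMatchingSet G N' ∧ #N' = #N ∧
      matchedVerts N' ⊆ insert y (matchedVerts N) ∧ #(M ∩ N) < #(M ∩ N') := by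
  obtain ⟨e, heM, hye⟩ := mem_matchedVerts.1 hyM
  obtain ⟨t, rfl⟩ : ∃ t, e = s(y, t) := ⟨Sym2.Mem.other hye, (Sym2.other_spec hye).symm⟩
  have hyt : G.Adj y t := hM.1 _ heM
  have heN : s(y, t) ∉ N := fun h => hyN (mem_matchedVerts.2 ⟨_, h, Sym2.mem_mk_left _ _⟩)
  obtain ⟨f, hfN, htf⟩ : ∃ f ∈ N, t ∈ f := by
    rw [← mem_matchedVerts]
    by_contra ht
    have := hmax _ (insert_subset (mem_union_left _ heM) subset_union_right)
      (hN.insert_edge hyt hyN ht)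
    rw [card_insert_of_notMem heN] at this
    omega
  have hfM : f ∉ M := fun h => heN (hM.eq_of_mem heM h (Sym2.mem_mk_right _ _) htf ▸ hfN)
  have htfree : t ∉ matchedVerts (N.erase f) := by
    rw [mem_matchedVerts]
    rintro ⟨g, hg, htg⟩
    exact (mem_erase.1 hg).1 (hN.eq_of_mem (mem_of_mem_erase hg) hfN htg htf)
  refine ⟨insert s(y, t) (N.erase f), ?_, ?_, ?_, ?_, ?_⟩
  · exact insert_subset (mem_union_left _ heM) ((erase_subset _ _).trans subset_union_right)
  · exact (hN.subset (erase_subset _ _)).insert_edge hyt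
      (fun h => hyN (matchedVerts_mono (erase_subset _ _) h)) htfree
  · rw [card_insert_of_notMem (fun h => heN (mem_of_mem_erase h)), card_erase_of_mem hfN,
      Nat.sub_add_cancel (card_pos.2 ⟨f, hfN⟩)]
  · intro v hv
    obtain ⟨g, hg, hvg⟩ := mem_matchedVerts.1 hv
    rcases mem_insert.1 hg with rfl | hg
    · rcases Sym2.mem_iff.1 hvg with rfl | rfl
      exacts [mem_insert_self _ _, mem_insert_of_mem (mem_matchedVerts.2 ⟨f, hfN, htf⟩)]
    · exact mem_insert_of_mem (mem_matchedVerts.2 ⟨g, mem_of_mem_erase hg, hvg⟩)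
  · refine card_lt_card ((ssubset_iff_of_subset ?_).2 ⟨s(y, t), ?_, ?_⟩)
    · intro g hg
      obtain ⟨hgM, hgN⟩ := mem_inter.1 hg
      exact mem_inter.2 ⟨hgM, mem_insert_of_mem (mem_erase.2 ⟨fun h => hfM (h ▸ hgM), hgN⟩)⟩
    · exact mem_inter.2 ⟨heM, mem_insert_self _ _⟩
    · exact fun h => heN (mem_inter.1 h).2

end IsMatchingSet

namespace SimpleGraph

lemma matchingNumberOn_add_le {s t : Finset V} (h : Disjoint s t) :
    G.matchingNumberOn s + G.matchingNumberOn t ≤ G.matchingNumberOn (s ∪ t) := by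
  obtain ⟨M, hMs, hM, hMc⟩ := G.exists_isMaximumMatchingOn s
  obtain ⟨N, hNt, hN, hNc⟩ := G.exists_isMaximumMatchingOn t
  have hcross : ∀ e ∈ M, ∀ f ∈ N, ∀ v ∈ e, v ∉ f := fun e he f hf v hve hvf =>
    Finset.disjoint_left.1 h (mem_sym2_iff.1 (hMs he) v hve) (mem_sym2_iff.1 (hNt hf) v hvf)
  have hMN : IsMatchingSet G (M ∪ N) := by
    refine ⟨fun e he => (mem_union.1 he).elim (hM.1 e) (hN.1 e), ?_⟩
    intro e he f hf hef v hve hvf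
    rcases mem_union.1 he with he | he <;> rcases mem_union.1 hf with hf | hf
    exacts [hM.2 e he f hf hef v hve hvf, hcross e he f hf v hve hvf,
      hcross f hf e he v hvf hve, hN.2 e he f hf hef v hve hvf]
  have hdisj : Disjoint M N := Finset.disjoint_left.2 fun e he heN => by
    obtain ⟨v, hv⟩ : ∃ v, v ∈ e := ⟨_, Sym2.out_fst_mem e⟩
    exact hcross e he e heN v hv hv
  rw [← hMc, ← hNc, ← card_union_of_disjoint hdisj]
  exact card_le_matchingNumberOn hMN
    (union_subset (hMs.trans (sym2_mono subset_union_left))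
      (hNt.trans (sym2_mono subset_union_right)))

lemma mem_sym2_or_mem_sym2_of_not_adj {s t : Finset V} (h : ∀ a ∈ s, ∀ b ∈ t, ¬G.Adj a b)
    {e : Sym2 V} (he : e ∈ G.edgeSet) (hst : e ∈ (s ∪ t).sym2) : e ∈ s.sym2 ∨ e ∈ t.sym2 := by
  induction e with
  | h a b =>
    simp only [mk_mem_sym2_iff, mem_union] at hst ⊢
    have hab : G.Adj a b := he
    obtain ⟨ha | ha, hb | hb⟩ := hst
    exacts [.inl ⟨ha, hb⟩, (h a ha b hb hab).elim, (h b hb a ha hab.symm).elim, .inr ⟨ha, hb⟩]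

lemma matchingNumberOn_union_le {s t : Finset V} (h : ∀ a ∈ s, ∀ b ∈ t, ¬G.Adj a b) :
    G.matchingNumberOn (s ∪ t) ≤ G.matchingNumberOn s + G.matchingNumberOn t := by
  obtain ⟨M, hMst, hM, hMc⟩ := G.exists_isMaximumMatchingOn (s ∪ t)
  rw [← hMc]
  have hsplit : M ⊆ M ∩ s.sym2 ∪ M ∩ t.sym2 := fun e he => by
    rcases mem_sym2_or_mem_sym2_of_not_adj h (hM.1 e he) (hMst he) with hs | ht
    exacts [mem_union_left _ (mem_inter.2 ⟨he, hs⟩), mem_union_right _ (mem_inter.2 ⟨he, ht⟩)]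
  calc #M ≤ #(M ∩ s.sym2) + #(M ∩ t.sym2) := (card_le_card hsplit).trans (card_union_le _ _)
    _ ≤ _ := add_le_add
      (card_le_matchingNumberOn (hM.subset inter_subset_left) inter_subset_right)
      (card_le_matchingNumberOn (hM.subset inter_subset_left) inter_subset_right)

namespace IsMaximumMatchingOn

variable {C : Finset V} {M : Finset (Sym2 V)}

lemma card_matchedVerts (hM : G.IsMaximumMatchingOn C M) :
    #(matchedVerts M) = 2 * G.matchingNumberOn C := by
  rw [hM.isMatchingSet.card_matchedVerts, hM.card_eq]

lemma not_adj (hM : G.IsMaximumMatchingOn C M) {u v : V} (hu : u ∈ C) (hv : v ∈ C)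
    (huM : u ∉ matchedVerts M) (hvM : v ∉ matchedVerts M) : ¬G.Adj u v := fun huv => by
  have := card_le_matchingNumberOn (hM.isMatchingSet.insert_edge huv huM hvM)
    (insert_subset (mk_mem_sym2_iff.2 ⟨hu, hv⟩) hM.subset_sym2)
  rw [card_insert_of_notMem fun h => huM (mem_matchedVerts.2 ⟨_, h, Sym2.mem_mk_left _ _⟩),
    hM.card_eq] at this
  omega

/-- The induction step is Lovász's proof of Gallai's lemma: with `w` the next vertex after `u`,
a maximum matching `N` missing `w` and as close to `M` as possible must match `u` and (by induction)
`v`, and then the exchange lemma produces one even closer to `M`. -/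
lemma mem_matchedVerts_of_reachable
    (hmiss : ∀ w ∈ C, ∃ N, G.IsMaximumMatchingOn C N ∧ w ∉ matchedVerts N)
    {u v : (C : Set V)} (huv : (G.induce (C : Set V)).Reachable u v) (hne : u ≠ v)
    (hM : G.IsMaximumMatchingOn C M) (hu : (u : V) ∉ matchedVerts M) :
    (v : V) ∈ matchedVerts M := by
  classical
  obtain ⟨p⟩ := huv
  induction p generalizing M with
  | nil => exact absurd rfl hne
  | @cons u w v huw q ih =>
    by_contra hv
    have hwM : (w : V) ∈ matchedVerts M := by
      by_contra hw
      exact hM.not_adj u.2 w.2 hu hw huw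
    obtain ⟨N, hN, hNmax⟩ := exists_max_image
      (C.sym2.powerset.filter fun N => G.IsMaximumMatchingOn C N ∧ (w : V) ∉ matchedVerts N)
      (fun N => #(M ∩ N))
      (by
        obtain ⟨N, hN, hwN⟩ := hmiss w w.2
        exact ⟨N, mem_filter.2 ⟨mem_powerset.2 hN.subset_sym2, hN, hwN⟩⟩)
    obtain ⟨-, hN, hwN⟩ := mem_filter.1 hN
    have huN : (u : V) ∈ matchedVerts N := by
      by_contra h
      exact hN.not_adj u.2 w.2 h hwN huw
    have hvN : (v : V) ∈ matchedVerts N := ih (fun h => hv (h ▸ hwM)) hN hwN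
    obtain ⟨y, hy, hyw⟩ : ∃ y ∈ matchedVerts M \ matchedVerts N, y ≠ w := by
      refine exists_mem_ne ?_ _
      rw [card_sdiff_comm (by rw [hM.card_matchedVerts, hN.card_matchedVerts])]
      calc 1 < #{(u : V), (v : V)} := by
            rw [card_pair (Subtype.coe_injective.ne hne)]; omega
        _ ≤ _ := card_le_card (insert_subset (mem_sdiff.2 ⟨huN, hu⟩)
            (singleton_subset_iff.2 (mem_sdiff.2 ⟨hvN, hv⟩)))
    obtain ⟨hyM, hyN⟩ := mem_sdiff.1 hy
    have hMN : M ∪ N ⊆ C.sym2 := union_subset hM.subset_sym2 hN.subset_sym2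
    obtain ⟨N', hN'MN, hN', hcard, hcov, hlt⟩ :=
      hM.isMatchingSet.exists_exchange hN.isMatchingSet hyM hyN fun K hK hKm =>
        hN.card_eq ▸ card_le_matchingNumberOn hKm (hK.trans hMN)
    have hwN' : (w : V) ∉ matchedVerts N' := fun h =>
      (mem_insert.1 (hcov h)).elim (fun h => hyw h.symm) hwN
    have := hNmax N' (mem_filter.2 ⟨mem_powerset.2 (hN'MN.trans hMN),
      ⟨hN'MN.trans hMN, hN', hcard.trans hN.card_eq⟩, hwN'⟩)
    omega

end IsMaximumMatchingOn

/-- **Gallai's lemma**. -/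
theorem card_le_two_mul_matchingNumberOn_add_one {C : Finset V}
    (hC : (G.induce (C : Set V)).Preconnected)
    (hcrit : ∀ u ∈ C, G.matchingNumberOn C ≤ G.matchingNumberOn (C.erase u)) :
    #C ≤ 2 * G.matchingNumberOn C + 1 := by
  have hmiss : ∀ w ∈ C, ∃ N, G.IsMaximumMatchingOn C N ∧ w ∉ matchedVerts N := by
    intro w hw
    obtain ⟨N, hNs, hN, hNc⟩ := G.exists_isMaximumMatchingOn (C.erase w)
    refine ⟨N, ⟨hNs.trans (sym2_mono (erase_subset _ _)), hN, ?_⟩, fun h => ?_⟩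
    · exact le_antisymm (card_le_matchingNumberOn hN (hNs.trans (sym2_mono (erase_subset _ _))))
        (hNc ▸ hcrit w hw)
    · exact notMem_erase w C (matchedVerts_subset hNs h)
  by_contra! hlarge
  obtain ⟨M, hM⟩ := G.exists_isMaximumMatchingOn C
  have : 1 < #(C \ matchedVerts M) := by
    rw [card_sdiff_of_subset (matchedVerts_subset hM.subset_sym2), hM.card_matchedVerts]
    omega
  obtain ⟨u, hu, v, hv, huv⟩ := one_lt_card.1 this
  obtain ⟨huC, huM⟩ := mem_sdiff.1 hu
  obtain ⟨hvC, hvM⟩ := mem_sdiff.1 hv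
  exact hvM (hM.mem_matchedVerts_of_reachable (u := ⟨u, huC⟩) (v := ⟨v, hvC⟩) hmiss
    (hC _ _) (by simpa using huv) huM)

lemma exists_preconnected_induce_closed {s : Finset V} {a : V} (ha : a ∈ s) :
    ∃ C ⊆ s, a ∈ C ∧ (G.induce (C : Set V)).Preconnected ∧
      ∀ x ∈ C, ∀ y ∈ s, G.Adj x y → y ∈ C := by
  classical
  obtain ⟨C, hC, hmax⟩ := exists_max_image
    (s.powerset.filter fun C : Finset V => a ∈ C ∧ (G.induce (C : Set V)).Preconnected) card
    ⟨{a}, mem_filter.2 ⟨mem_powerset.2 (singleton_subset_iff.2 ha), mem_singleton_self a,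
      by rw [coe_singleton]; exact Preconnected.of_subsingleton⟩⟩
  obtain ⟨hCs, haC, hconn⟩ := mem_filter.1 hC
  refine ⟨C, mem_powerset.1 hCs, haC, hconn, fun x hx y hy hxy => ?_⟩
  by_contra hyC
  have hins : (G.induce ((insert y C : Finset V) : Set V)).Preconnected := by
    rw [coe_insert, Set.insert_eq, Set.union_comm]
    exact (connected_induce_union hconn Preconnected.of_subsingleton hx (Set.mem_singleton y)
      hxy).preconnected
  have := hmax (insert y C) (mem_filter.2
    ⟨mem_powerset.2 (insert_subset hy (mem_powerset.1 hCs)), mem_insert_of_mem haC, hins⟩)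
  rw [card_insert_of_notMem hyC] at this
  omega

lemma matchingNumberOn_le_erase_of_not_adj {s C : Finset V} (hCs : C ⊆ s)
    (hcross : ∀ x ∈ C, ∀ y ∈ s \ C, ¬G.Adj x y)
    (hess : ∀ v ∈ s, G.matchingNumberOn s ≤ G.matchingNumberOn (s.erase v)) :
    ∀ u ∈ C, G.matchingNumberOn C ≤ G.matchingNumberOn (C.erase u) := by
  intro u hu
  have herase : s.erase u = C.erase u ∪ (s \ C) := by
    ext x
    have := @hCs x
    have : x = u → x ∈ C := fun h => h ▸ hu
    simp only [mem_erase, mem_union, mem_sdiff]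
    tauto
  have hsplit := G.matchingNumberOn_add_le (disjoint_sdiff (s := C) (t := s))
  rw [union_sdiff_of_subset hCs] at hsplit
  have := herase ▸ matchingNumberOn_union_le fun x hx => hcross x (mem_of_mem_erase hx)
  have := hess u (hCs hu)
  omega

variable [Fintype V] [DecidableRel G.Adj]

variable (G) in
def edgesOn (s : Finset V) : Finset (Sym2 V) := G.edgeFinset ∩ s.sym2

lemma card_edgesOn_le_choose (s : Finset V) : #(G.edgesOn s) ≤ (#s).choose 2 := by
  rw [← Sym2.card_image_offDiag]
  refine card_le_card fun e he => ?_
  obtain ⟨heG, hes⟩ := mem_inter.1 he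
  induction e with
  | h a b =>
    rw [mem_edgeFinset, mem_edgeSet] at heG
    rw [mk_mem_sym2_iff] at hes
    exact mem_image.2 ⟨(a, b), mem_offDiag.2 ⟨hes.1, hes.2, heG.ne⟩, rfl⟩

lemma two_mul_card_edgesOn_le {s : Finset V} {Δ : ℕ} (hd : ∀ v ∈ s, G.degree v ≤ Δ) :
    2 * #(G.edgesOn s) ≤ #s * Δ := by
  rw [mul_comm]
  refine card_mul_le_card_mul (fun e v => v ∈ e) (fun e he => ?_) (fun v hv => ?_)
  · obtain ⟨heG, hes⟩ := mem_inter.1 he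
    induction e with
    | h a b =>
      rw [mem_edgeFinset, mem_edgeSet] at heG
      rw [mk_mem_sym2_iff] at hes
      rw [← card_pair heG.ne]
      refine card_le_card (insert_subset ?_ (singleton_subset_iff.2 ?_))
      exacts [mem_filter.2 ⟨hes.1, Sym2.mem_mk_left a b⟩,
        mem_filter.2 ⟨hes.2, Sym2.mem_mk_right a b⟩]
  · refine (card_le_card fun e he => ?_).trans
      ((card_incidenceFinset_eq_degree G v).trans_le (hd v hv))
    obtain ⟨he, hve⟩ := mem_filter.1 he
    exact (mem_incidenceFinset G v e).2 ⟨mem_edgeFinset.1 (mem_inter.1 he).1, hve⟩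

lemma card_edgesOn_le_card_edgesOn_erase_add_degree (s : Finset V) (v : V) :
    #(G.edgesOn s) ≤ #(G.edgesOn (s.erase v)) + G.degree v := by
  rw [← card_incidenceFinset_eq_degree]
  refine (card_le_card fun e he => ?_).trans (card_union_le _ _)
  obtain ⟨heG, hes⟩ := mem_inter.1 he
  by_cases hve : v ∈ e
  · exact mem_union_right _ ((mem_incidenceFinset G v e).2 ⟨mem_edgeFinset.1 heG, hve⟩)
  · refine mem_union_left _ (mem_inter.2 ⟨heG, mem_sym2_iff.2 fun x hx => ?_⟩)
    exact mem_erase.2 ⟨fun h => hve (h ▸ hx), mem_sym2_iff.1 hes x hx⟩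

lemma card_edgesOn_union_le {s t : Finset V} (h : ∀ a ∈ s, ∀ b ∈ t, ¬G.Adj a b) :
    #(G.edgesOn (s ∪ t)) ≤ #(G.edgesOn s) + #(G.edgesOn t) := by
  refine (card_le_card fun e he => ?_).trans (card_union_le _ _)
  obtain ⟨heG, hest⟩ := mem_inter.1 he
  rcases mem_sym2_or_mem_sym2_of_not_adj h (mem_edgeFinset.1 heG) hest with hs | ht
  exacts [mem_union_left _ (mem_inter.2 ⟨heG, hs⟩), mem_union_right _ (mem_inter.2 ⟨heG, ht⟩)]

lemma card_edgesOn_le_chvatalHansonBound {s : Finset V} {μ Δ : ℕ}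
    (hd : ∀ v ∈ s, G.degree v ≤ Δ) (hs : #s ≤ 2 * μ + 1) :
    #(G.edgesOn s) ≤ chvatalHansonBound μ Δ := by
  unfold chvatalHansonBound
  by_cases hμ : μ < (Δ + 1) / 2
  · -- here `#s ≤ Δ`: count pairs
    have hpairs : (2 * μ + 1).choose 2 ≤ μ * Δ := by
      rw [Nat.choose_two_right, Nat.add_sub_cancel, mul_left_comm,
        Nat.mul_div_cancel_left _ two_pos]
      nlinarith [show 2 * μ + 1 ≤ Δ by omega]
    have := (G.card_edgesOn_le_choose s).trans (Nat.choose_le_choose 2 hs)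
    omega
  · have hdeg := two_mul_card_edgesOn_le hd
    have : #s * Δ ≤ 2 * (μ * Δ) + Δ := by nlinarith
    have : Δ / 2 ≤ Δ / 2 * (μ / ((Δ + 1) / 2)) := by
      rcases Nat.eq_zero_or_pos Δ with rfl | hΔ
      · simp
      · exact Nat.le_mul_of_pos_right _ (Nat.div_pos (not_lt.1 hμ) (by omega))
    omega

theorem card_edgesOn_le_chvatalHansonBound_matchingNumberOn {Δ : ℕ}
    (hd : ∀ v, G.degree v ≤ Δ) (s : Finset V) :
    #(G.edgesOn s) ≤ chvatalHansonBound (G.matchingNumberOn s) Δ := by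
  induction s using Finset.strongInduction with
  | H s ih =>
  rcases s.eq_empty_or_nonempty with rfl | ⟨a, ha⟩
  · simp [edgesOn]
  by_cases hess : ∃ v ∈ s, G.matchingNumberOn (s.erase v) < G.matchingNumberOn s
  · obtain ⟨v, hv, hlt⟩ := hess
    calc #(G.edgesOn s) ≤ #(G.edgesOn (s.erase v)) + Δ :=
          (card_edgesOn_le_card_edgesOn_erase_add_degree s v).trans (Nat.add_le_add_left (hd v) _)
      _ ≤ chvatalHansonBound (G.matchingNumberOn (s.erase v)) Δ + Δ :=
          Nat.add_le_add_right (ih _ (erase_ssubset hv)) _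
      _ ≤ chvatalHansonBound (G.matchingNumberOn (s.erase v) + 1) Δ :=
          add_le_chvatalHansonBound_succ _ _
      _ ≤ chvatalHansonBound (G.matchingNumberOn s) Δ := chvatalHansonBound_mono Δ hlt
  push Not at hess
  obtain ⟨C, hCs, haC, hC, hclosed⟩ := G.exists_preconnected_induce_closed ha
  have hcross : ∀ x ∈ C, ∀ y ∈ s \ C, ¬G.Adj x y := fun x hx y hy hxy =>
    (mem_sdiff.1 hy).2 (hclosed x hx y (mem_sdiff.1 hy).1 hxy)
  have hsplit : C ∪ (s \ C) = s := union_sdiff_of_subset hCs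
  have hν := G.matchingNumberOn_add_le (disjoint_sdiff (s := C) (t := s))
  rw [hsplit] at hν
  calc #(G.edgesOn s) = #(G.edgesOn (C ∪ (s \ C))) := by rw [hsplit]
    _ ≤ #(G.edgesOn C) + #(G.edgesOn (s \ C)) := card_edgesOn_union_le hcross
    _ ≤ chvatalHansonBound (G.matchingNumberOn C) Δ +
          chvatalHansonBound (G.matchingNumberOn (s \ C)) Δ :=
        Nat.add_le_add (card_edgesOn_le_chvatalHansonBound (fun v _ => hd v)
            (card_le_two_mul_matchingNumberOn_add_one hC
              (matchingNumberOn_le_erase_of_not_adj hCs hcross hess)))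
          (ih _ (sdiff_ssubset hCs ⟨a, haC⟩))
    _ ≤ chvatalHansonBound (G.matchingNumberOn s) Δ :=
        (chvatalHansonBound_add_le _ _ _).trans (chvatalHansonBound_mono Δ hν)

end SimpleGraph

end

theorem chvatal_hanson_upper_general {V : Type*} [Fintype V] [DecidableEq V] (G : SimpleGraph V)
    [DecidableRel G.Adj] (ν Δ : ℕ)
    (hν : ∀ M : Finset (Sym2 V), IsMatchingSet G M → M.card ≤ ν)
    (hd : ∀ v : V, G.degree v ≤ Δ) :
    G.edgeFinset.card ≤ ν * Δ + (Δ / 2) * (ν / ((Δ + 1) / 2)) := by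
  obtain ⟨M, -, hM, hMc⟩ := G.exists_isMaximumMatchingOn univ
  have hE : G.edgesOn univ = G.edgeFinset :=
    inter_eq_left.2 fun e _ => mem_sym2_iff.2 fun _ _ => mem_univ _
  calc #G.edgeFinset = #(G.edgesOn univ) := by rw [hE]
    _ ≤ chvatalHansonBound (G.matchingNumberOn univ) Δ :=
      G.card_edgesOn_le_chvatalHansonBound_matchingNumberOn hd univ
    _ ≤ chvatalHansonBound ν Δ := chvatalHansonBound_mono Δ (hMc ▸ hν M hM)

theorem chvatal_hanson_upper {V : Type*} [Fintype V] [DecidableEq V] (G : SimpleGraph V)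
    [DecidableRel G.Adj] (ν Δ : ℕ) (hΔ1 : 1 ≤ Δ)
    (hν : ∀ M : Finset (Sym2 V), IsMatchingSet G M → M.card ≤ ν)
    (hd : ∀ v : V, G.degree v ≤ Δ) :
    G.edgeFinset.card ≤ ν * Δ + (Δ / 2) * (ν / ((Δ + 1) / 2)) :=
  chvatal_hanson_upper_general G ν Δ hν hd
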